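/- arXiv:1904.07322 — 2 statements merged into one kernel-verified Lean document; each statement's English description precedes it below -/
import Mathlib

section
/- Let (C, T, F) be a cotorsion torsion triple in an abelian category A. Then the functors c : A → C/(C ∩ T) and f : A → F restrict to mutually inverse equivalences between F and the additive quotient C/(C ∩ T). -/
/-! For `X ∈ F` the special `C`-precover `0 ⟶ dX ⟶ cX ⟶ X ⟶ 0` is also the torsion sequence of
`cX`, so `f (c X) ≅ X`; for `Y ∈ C` the torsion sequence `0 ⟶ tY ⟶ Y ⟶ fY ⟶ 0` is a special
`C`-precover of `fY`, so `c (f Y) ≅ Y` in `C/(C ∩ T)`. Passing to the quotient by `C ∩ T` is what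
makes `c` well defined: two lifts of a map into a special precover differ by a map into its kernel,
and a map from an object of `C` into an object of `T` factors through `C ∩ T`. -/

open CategoryTheory Category Limits

attribute [local instance] CategoryTheory.Abelian.hasFiniteBiproducts
attribute [local instance] CategoryTheory.Limits.HasFiniteBiproducts.of_hasFiniteProducts

universe w v u

namespace Paper

variable {A : Type u} [Category.{v} A] [Abelian A]

/-- `IsSes i p` expresses that `0 ⟶ X ⟶ Y ⟶ Z ⟶ 0` is a short exact sequence. -/
def IsSes {X Y Z : A} (i : X ⟶ Y) (p : Y ⟶ Z) : Prop :=
  ∃ w : i ≫ p = 0, (ShortComplex.mk i p w).ShortExact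

/-- `Ext¹(X, Y) = 0`, phrased as: every extension of `X` by `Y` splits. -/
def Ext1Zero (X Y : A) : Prop :=
  ∀ ⦃E : A⦄ (i : Y ⟶ E) (p : E ⟶ X), IsSes i p → ∃ s : X ⟶ E, s ≫ p = 𝟙 X

/-- A torsion pair `(T, F)` of (strictly full) subcategories of an abelian category. -/
structure IsTorsionPair (T F : Set A) : Prop where
  isoClosed_torsion : ∀ {X Y : A}, (X ≅ Y) → X ∈ T → Y ∈ T
  isoClosed_torsionFree : ∀ {X Y : A}, (X ≅ Y) → X ∈ F → Y ∈ F
  hom_zero : ∀ {X Y : A}, X ∈ T → Y ∈ F → ∀ f : X ⟶ Y, f = 0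
  seq : ∀ X : A, ∃ (tX fX : A) (i : tX ⟶ X) (p : X ⟶ fX), tX ∈ T ∧ fX ∈ F ∧ IsSes i p

/-- A (complete) cotorsion pair `(C, D)` in an abelian category. -/
structure IsCotorsionPair (C D : Set A) : Prop where
  left_eq : C = {X : A | ∀ Y ∈ D, Ext1Zero X Y}
  right_eq : D = {Y : A | ∀ X ∈ C, Ext1Zero X Y}
  seq₁ : ∀ X : A, ∃ (dX cX : A) (i : dX ⟶ cX) (p : cX ⟶ X), dX ∈ D ∧ cX ∈ C ∧ IsSes i p
  seq₂ : ∀ X : A, ∃ (dX cX : A) (i : X ⟶ dX) (p : dX ⟶ cX), dX ∈ D ∧ cX ∈ C ∧ IsSes i p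

/-- `f` factors through some object belonging to the class `P`. -/
def FactorsThroughClass (P : Set A) {X Y : A} (f : X ⟶ Y) : Prop :=
  ∃ (Z : A) (_ : Z ∈ P) (a : X ⟶ Z) (b : Z ⟶ Y), a ≫ b = f

/-- The hom-relation on the full subcategory on `S` identifying two morphisms whose
difference factors through an object of `P`. -/
def quotRel (S P : Set A) : HomRel (ObjectProperty.FullSubcategory (· ∈ S)) :=
  fun {X Y} f g =>
    FactorsThroughClass P (f.hom - g.hom)

/-- The additive quotient of the full subcategory on `S` by the morphisms factoring
through objects of `P`. -/
abbrev AddQuot (S P : Set A) := CategoryTheory.Quotient (quotRel S P)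

/-- The subcategory of quotients of (finite direct sums of) objects of `T`. -/
def Fac (T : Set A) : Set A := {X : A | ∃ Y ∈ T, ∃ p : Y ⟶ X, Epi p}

/-- The right `Hom`-orthogonal `T^⊥`. -/
def rightHomPerp (T : Set A) : Set A := {X : A | ∀ Y ∈ T, ∀ f : Y ⟶ X, f = 0}

/-- The left `Hom`-orthogonal `^⊥F`. -/
def leftHomPerp (F : Set A) : Set A := {X : A | ∀ Y ∈ F, ∀ f : X ⟶ Y, f = 0}

/-- The right `Ext¹`-orthogonal `T^{⊥₁}`. -/
def rightExt1Perp (T : Set A) : Set A := {X : A | ∀ Y ∈ T, Ext1Zero Y X}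

/-- The left `Ext¹`-orthogonal `^{⊥₁}D`. -/
def leftExt1Perp (D : Set A) : Set A := {X : A | ∀ Y ∈ D, Ext1Zero X Y}

/-- `X` has projective dimension at most one: it has a length-one projective resolution. -/
def PdLeOne (X : A) : Prop :=
  ∃ (P₁ P₀ : A) (i : P₁ ⟶ P₀) (p : P₀ ⟶ X), Projective P₁ ∧ Projective P₀ ∧ IsSes i p

/-- A weak tilting subcategory of an abelian category with enough projectives. -/
structure IsWeakTilting (T : Set A) : Prop where
  sum_mem : ∀ {X Y : A}, X ∈ T → Y ∈ T → (X ⊞ Y) ∈ T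
  summand_mem : ∀ {X Y : A}, X ∈ T → (∃ (s : Y ⟶ X) (r : X ⟶ Y), s ≫ r = 𝟙 Y) → Y ∈ T
  ext1_zero : ∀ {X Y : A}, X ∈ T → Y ∈ T → Ext1Zero X Y
  pd_le_one : ∀ X ∈ T, PdLeOne X
  coresolution : ∀ P : A, Projective P → ∃ (T₀ T₁ : A) (i : P ⟶ T₀) (p : T₀ ⟶ T₁),
    T₀ ∈ T ∧ T₁ ∈ T ∧ IsSes i p

/-- `φ : X ⟶ E` is a right `T`-approximation of `E`. -/
def IsRightApprox (T : Set A) {X E : A} (φ : X ⟶ E) : Prop :=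
  X ∈ T ∧ ∀ X' ∈ T, ∀ f : X' ⟶ E, ∃ g : X' ⟶ X, g ≫ φ = f

/-- A tilting subcategory: a weak tilting subcategory that is contravariantly finite. -/
structure IsTilting (T : Set A) extends IsWeakTilting T : Prop where
  contravariantly_finite : ∀ E : A, ∃ (X : A) (φ : X ⟶ E), IsRightApprox T φ


section ShortExact

variable {X Y Z W : A} {i : X ⟶ Y} {p : Y ⟶ Z}

lemma IsSes.epi (h : IsSes i p) : Epi p :=
  h.2.epi_g

lemma IsSes.mono (h : IsSes i p) : Mono i :=
  h.2.mono_f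

lemma IsSes.exists_desc (h : IsSes i p) (g : Y ⟶ W) (hg : i ≫ g = 0) :
    ∃ d : Z ⟶ W, p ≫ d = g :=
  have := h.epi
  let ⟨d, hd⟩ := CokernelCofork.IsColimit.desc' h.2.exact.gIsCokernel g hg
  ⟨d, hd⟩

lemma IsSes.exists_lift (h : IsSes i p) (g : W ⟶ Y) (hg : g ≫ p = 0) :
    ∃ l : W ⟶ X, l ≫ i = g :=
  have := h.mono
  let ⟨l, hl⟩ := KernelFork.IsLimit.lift' h.2.exact.fIsKernel g hg
  ⟨l, hl⟩

/-- The pullback of the sequence along `g` is an extension of `W` by `X`; a splitting of it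
gives the lift. -/
lemma IsSes.exists_lift_of_ext1Zero (h : IsSes i p) (hext : Ext1Zero W X) (g : W ⟶ Z) :
    ∃ l : W ⟶ Y, l ≫ p = g := by
  have := h.epi
  have := h.mono
  let k : X ⟶ pullback p g := pullback.lift i 0 (by rw [h.1, zero_comp])
  have hk_fst : k ≫ pullback.fst p g = i := pullback.lift_fst _ _ _
  have hk_snd : k ≫ pullback.snd p g = 0 := pullback.lift_snd _ _ _
  have : Mono k := mono_of_mono_fac hk_fst
  have hk_kernel : IsLimit (KernelFork.ofι k hk_snd) := by
    refine KernelFork.IsLimit.ofι' k hk_snd (fun {V} e he => ?_)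
    let m := KernelFork.IsLimit.lift' h.2.exact.fIsKernel (e ≫ pullback.fst p g)
      (by rw [assoc, pullback.condition, ← assoc, he, zero_comp])
    exact ⟨m.1, pullback.hom_ext (by rw [assoc, hk_fst]; exact m.2)
      (by rw [assoc, hk_snd, comp_zero, he])⟩
  obtain ⟨s, hs⟩ := hext k (pullback.snd p g)
    ⟨hk_snd, { exact := ShortComplex.exact_of_f_is_kernel _ hk_kernel }⟩
  exact ⟨s ≫ pullback.fst p g, by rw [assoc, pullback.condition, ← assoc, hs, id_comp]⟩

end ShortExact

structure TorsionSeq (T F : Set A) (X : A) where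
  torsion : A
  free : ObjectProperty.FullSubcategory (· ∈ F)
  ι : torsion ⟶ X
  π : X ⟶ free.obj
  torsion_mem : torsion ∈ T
  isSes : IsSes ι π

structure SpecialPrecover (C D : Set A) (X : A) where
  ker : A
  cover : ObjectProperty.FullSubcategory (· ∈ C)
  ι : ker ⟶ cover.obj
  π : cover.obj ⟶ X
  ker_mem : ker ∈ D
  isSes : IsSes ι π

abbrev toAddQuot (S P : Set A) : ObjectProperty.FullSubcategory (· ∈ S) ⥤ AddQuot S P :=
  Quotient.functor (quotRel S P)

namespace IsTorsionPair

variable {T F : Set A}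

lemma mem_torsion_of_forall_hom_eq_zero (ht : IsTorsionPair T F) {B : A}
    (h : ∀ G ∈ F, ∀ f : B ⟶ G, f = 0) : B ∈ T := by
  obtain ⟨tB, fB, i, p, htB, hfB, hses⟩ := ht.seq B
  obtain ⟨e, he⟩ := hses.exists_lift (𝟙 B) (by rw [id_comp, h fB hfB p])
  have := hses.mono
  have hie : i ≫ e = 𝟙 tB := by rw [← cancel_mono i, assoc, he, comp_id, id_comp]
  exact ht.isoClosed_torsion ⟨i, e, hie, he⟩ htB

lemma mem_torsion_of_isSes (ht : IsTorsionPair T F) {X Y Z : A} {i : X ⟶ Y} {p : Y ⟶ Z}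
    (hses : IsSes i p) (hX : X ∈ T) (hZ : Z ∈ T) : Y ∈ T := by
  refine ht.mem_torsion_of_forall_hom_eq_zero (fun G hG f => ?_)
  obtain ⟨d, rfl⟩ := hses.exists_desc f (ht.hom_zero hX hG _)
  rw [ht.hom_zero hZ hG d, comp_zero]

lemma exists_desc_of_isSes (ht : IsTorsionPair T F) {K Y Z G : A} {i : K ⟶ Y} {p : Y ⟶ Z}
    (hses : IsSes i p) (hK : K ∈ T) (hG : G ∈ F) (g : Y ⟶ G) : ∃ d : Z ⟶ G, p ≫ d = g :=
  hses.exists_desc g (ht.hom_zero hK hG _)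

lemma exists_iso_of_isSes (ht : IsTorsionPair T F) {K₁ K₂ Y G₁ G₂ : A} {i₁ : K₁ ⟶ Y}
    {p₁ : Y ⟶ G₁} {i₂ : K₂ ⟶ Y} {p₂ : Y ⟶ G₂} (hses₁ : IsSes i₁ p₁) (hses₂ : IsSes i₂ p₂)
    (hK₁ : K₁ ∈ T) (hK₂ : K₂ ∈ T) (hG₁ : G₁ ∈ F) (hG₂ : G₂ ∈ F) : ∃ e : G₁ ≅ G₂, p₁ ≫ e.hom = p₂ := by
  obtain ⟨d, hd⟩ := ht.exists_desc_of_isSes hses₁ hK₁ hG₂ p₂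
  obtain ⟨d', hd'⟩ := ht.exists_desc_of_isSes hses₂ hK₂ hG₁ p₁
  have := hses₁.epi
  have := hses₂.epi
  refine ⟨⟨d, d', ?_, ?_⟩, hd⟩
  · rw [← cancel_epi p₁, reassoc_of% hd, hd', comp_id]
  · rw [← cancel_epi p₂, reassoc_of% hd', hd, comp_id]

lemma nonempty_torsionSeq (ht : IsTorsionPair T F) (X : A) : Nonempty (TorsionSeq T F X) :=
  let ⟨_, fX, i, p, htX, hfX, hses⟩ := ht.seq X
  ⟨⟨_, ⟨fX, hfX⟩, i, p, htX, hses⟩⟩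

noncomputable def torsionSeq (ht : IsTorsionPair T F) (X : A) : TorsionSeq T F X :=
  (ht.nonempty_torsionSeq X).some

lemma exists_torsionFreeMap (ht : IsTorsionPair T F) {X Y : A} (g : X ⟶ Y) :
    ∃ h : (ht.torsionSeq X).free.obj ⟶ (ht.torsionSeq Y).free.obj,
      (ht.torsionSeq X).π ≫ h = g ≫ (ht.torsionSeq Y).π :=
  ht.exists_desc_of_isSes (ht.torsionSeq X).isSes (ht.torsionSeq X).torsion_mem
    (ht.torsionSeq Y).free.property _

noncomputable def torsionFreeMap (ht : IsTorsionPair T F) {X Y : A} (g : X ⟶ Y) :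
    (ht.torsionSeq X).free.obj ⟶ (ht.torsionSeq Y).free.obj :=
  (ht.exists_torsionFreeMap g).choose

lemma π_torsionFreeMap (ht : IsTorsionPair T F) {X Y : A} (g : X ⟶ Y) :
    (ht.torsionSeq X).π ≫ ht.torsionFreeMap g = g ≫ (ht.torsionSeq Y).π :=
  (ht.exists_torsionFreeMap g).choose_spec

lemma eq_torsionFreeMap (ht : IsTorsionPair T F) {X Y : A} {g : X ⟶ Y}
    {h : (ht.torsionSeq X).free.obj ⟶ (ht.torsionSeq Y).free.obj}
    (hh : (ht.torsionSeq X).π ≫ h = g ≫ (ht.torsionSeq Y).π) : h = ht.torsionFreeMap g := by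
  have := (ht.torsionSeq X).isSes.epi
  rw [← cancel_epi (ht.torsionSeq X).π, hh, π_torsionFreeMap]

noncomputable def torsionFreeFunctor (ht : IsTorsionPair T F) :
    A ⥤ ObjectProperty.FullSubcategory (· ∈ F) where
  obj X := (ht.torsionSeq X).free
  map g := ObjectProperty.homMk (ht.torsionFreeMap g)
  map_id X := by
    ext
    exact (ht.eq_torsionFreeMap (by simp)).symm
  map_comp f g := by
    ext
    exact (ht.eq_torsionFreeMap
      (by simp [reassoc_of% (ht.π_torsionFreeMap f), ht.π_torsionFreeMap])).symm

lemma torsionFreeFunctor_map_eq_of_factorsThroughClass (ht : IsTorsionPair T F) {X Y : A}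
    {f g : X ⟶ Y} (hfg : FactorsThroughClass T (f - g)) :
    ht.torsionFreeFunctor.map f = ht.torsionFreeFunctor.map g := by
  obtain ⟨Z, hZ, a, b, hab⟩ := hfg
  have hzero : (f - g) ≫ (ht.torsionSeq Y).π = 0 := by
    rw [← hab, assoc, ht.hom_zero hZ (ht.torsionSeq Y).free.property (b ≫ _), comp_zero]
  rw [Preadditive.sub_comp, sub_eq_zero] at hzero
  refine ObjectProperty.hom_ext _ (ht.eq_torsionFreeMap (h := ht.torsionFreeMap f) (g := g) ?_)
  rw [π_torsionFreeMap, hzero]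

end IsTorsionPair

namespace IsCotorsionPair

variable {C T F : Set A}

lemma exists_lift_of_isSes (hct : IsCotorsionPair C T) {K E Z W : A} {i : K ⟶ E} {p : E ⟶ Z}
    (hses : IsSes i p) (hK : K ∈ T) (hW : W ∈ C) (g : W ⟶ Z) : ∃ l : W ⟶ E, l ≫ p = g := by
  rw [hct.left_eq] at hW
  exact hses.exists_lift_of_ext1Zero (hW K hK) g

/-- The kernel `K ∈ T` has a special precover `0 ⟶ D ⟶ C' ⟶ K ⟶ 0`, and `C' ∈ C ∩ T` because
`T` is closed under extensions; a map `W ⟶ K` lifts to `C'` since `Ext¹(W, D) = 0`. -/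
lemma factorsThroughClass_of_comp_eq_zero (hct : IsCotorsionPair C T) (ht : IsTorsionPair T F)
    {W K E Z : A} {i : K ⟶ E} {p : E ⟶ Z} (hses : IsSes i p) (hK : K ∈ T) (hW : W ∈ C) {h : W ⟶ E}
    (hh : h ≫ p = 0) : FactorsThroughClass (C ∩ T) h := by
  obtain ⟨u, rfl⟩ := hses.exists_lift h hh
  obtain ⟨D, C', j, q, hD, hC', hq⟩ := hct.seq₁ K
  obtain ⟨l, rfl⟩ := hct.exists_lift_of_isSes hq hD hW u
  exact ⟨C', ⟨hC', ht.mem_torsion_of_isSes hq hD hK⟩, l, q ≫ i, (assoc _ _ _).symm⟩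

lemma toAddQuot_map_eq_of_comp_eq (hct : IsCotorsionPair C T) (ht : IsTorsionPair T F)
    {W E : ObjectProperty.FullSubcategory (· ∈ C)} {K Z : A} {i : K ⟶ E.obj} {p : E.obj ⟶ Z}
    (hses : IsSes i p) (hK : K ∈ T) {u v : W ⟶ E} (huv : u.hom ≫ p = v.hom ≫ p) :
    (toAddQuot C (C ∩ T)).map u = (toAddQuot C (C ∩ T)).map v :=
  CategoryTheory.Quotient.sound _ (hct.factorsThroughClass_of_comp_eq_zero ht hses hK W.property
    (by rw [Preadditive.sub_comp, huv, sub_self]))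

lemma exists_isIso_toAddQuot_map (hct : IsCotorsionPair C T) (ht : IsTorsionPair T F)
    {W₁ W₂ : ObjectProperty.FullSubcategory (· ∈ C)} {K₁ K₂ Z : A} {i₁ : K₁ ⟶ W₁.obj}
    {p₁ : W₁.obj ⟶ Z} {i₂ : K₂ ⟶ W₂.obj} {p₂ : W₂.obj ⟶ Z} (hses₁ : IsSes i₁ p₁)
    (hses₂ : IsSes i₂ p₂) (hK₁ : K₁ ∈ T) (hK₂ : K₂ ∈ T) :
    ∃ u : W₁ ⟶ W₂, u.hom ≫ p₂ = p₁ ∧ IsIso ((toAddQuot C (C ∩ T)).map u) := by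
  obtain ⟨u, hu⟩ := hct.exists_lift_of_isSes hses₂ hK₂ W₁.property p₁
  obtain ⟨v, hv⟩ := hct.exists_lift_of_isSes hses₁ hK₁ W₂.property p₂
  let Q := toAddQuot C (C ∩ T)
  refine ⟨ObjectProperty.homMk u, hu, ⟨Q.map (ObjectProperty.homMk v), ?_, ?_⟩⟩
  · rw [← Q.map_comp, ← Q.map_id]
    exact hct.toAddQuot_map_eq_of_comp_eq ht hses₁ hK₁ (by simp [hv, hu])
  · rw [← Q.map_comp, ← Q.map_id]
    exact hct.toAddQuot_map_eq_of_comp_eq ht hses₂ hK₂ (by simp [hv, hu])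

lemma nonempty_specialPrecover (hct : IsCotorsionPair C T) (X : A) :
    Nonempty (SpecialPrecover C T X) :=
  let ⟨_, cX, i, p, hdX, hcX, hses⟩ := hct.seq₁ X
  ⟨⟨_, ⟨cX, hcX⟩, i, p, hdX, hses⟩⟩

noncomputable def specialPrecover (hct : IsCotorsionPair C T) (X : A) : SpecialPrecover C T X :=
  (hct.nonempty_specialPrecover X).some

lemma exists_precoverMap (hct : IsCotorsionPair C T) {X Y : A} (f : X ⟶ Y) :
    ∃ l : (hct.specialPrecover X).cover.obj ⟶ (hct.specialPrecover Y).cover.obj,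
      l ≫ (hct.specialPrecover Y).π = (hct.specialPrecover X).π ≫ f :=
  hct.exists_lift_of_isSes (hct.specialPrecover Y).isSes (hct.specialPrecover Y).ker_mem
    (hct.specialPrecover X).cover.property _

noncomputable def precoverMap (hct : IsCotorsionPair C T) {X Y : A} (f : X ⟶ Y) :
    (hct.specialPrecover X).cover ⟶ (hct.specialPrecover Y).cover :=
  ObjectProperty.homMk (hct.exists_precoverMap f).choose

lemma precoverMap_π (hct : IsCotorsionPair C T) {X Y : A} (f : X ⟶ Y) :
    (hct.precoverMap f).hom ≫ (hct.specialPrecover Y).π = (hct.specialPrecover X).π ≫ f :=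
  (hct.exists_precoverMap f).choose_spec

noncomputable def coverFunctor (hct : IsCotorsionPair C T) (ht : IsTorsionPair T F) :
    A ⥤ AddQuot C (C ∩ T) where
  obj X := (toAddQuot C (C ∩ T)).obj (hct.specialPrecover X).cover
  map f := (toAddQuot C (C ∩ T)).map (hct.precoverMap f)
  map_id X := by
    rw [← (toAddQuot C (C ∩ T)).map_id]
    exact hct.toAddQuot_map_eq_of_comp_eq ht (hct.specialPrecover X).isSes
      (hct.specialPrecover X).ker_mem (by simp [precoverMap_π])
  map_comp f g := by
    rw [← (toAddQuot C (C ∩ T)).map_comp]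
    exact hct.toAddQuot_map_eq_of_comp_eq ht (hct.specialPrecover _).isSes
      (hct.specialPrecover _).ker_mem
      (by simp [precoverMap_π, reassoc_of% (hct.precoverMap_π f)])

end IsCotorsionPair

section Equivalence

variable {C T F : Set A}

noncomputable def torsionFreeQuotFunctor (ht : IsTorsionPair T F) :
    AddQuot C (C ∩ T) ⥤ ObjectProperty.FullSubcategory (· ∈ F) :=
  CategoryTheory.Quotient.lift _ (ObjectProperty.ι _ ⋙ ht.torsionFreeFunctor)
    fun _ _ _ _ ⟨Z, hZ, a, b, hab⟩ =>
      ht.torsionFreeFunctor_map_eq_of_factorsThroughClass ⟨Z, hZ.2, a, b, hab⟩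

lemma nonempty_coverFunctor_comp_torsionFreeQuotFunctor_iso (hct : IsCotorsionPair C T)
    (ht : IsTorsionPair T F) :
    Nonempty (ObjectProperty.ι _ ⋙ hct.coverFunctor ht ⋙ torsionFreeQuotFunctor ht ≅
      𝟭 (ObjectProperty.FullSubcategory (· ∈ F))) := by
  choose e he using fun X : ObjectProperty.FullSubcategory (· ∈ F) =>
    let s := ht.torsionSeq (hct.specialPrecover X.obj).cover.obj
    ht.exists_iso_of_isSes s.isSes (hct.specialPrecover X.obj).isSes s.torsion_mem
      (hct.specialPrecover X.obj).ker_mem s.free.property X.property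
  refine ⟨NatIso.ofComponents (fun X => ObjectProperty.isoMk _ (e X)) fun {X Y} f => ?_⟩
  have := (ht.torsionSeq (hct.specialPrecover X.obj).cover.obj).isSes.epi
  ext
  change ht.torsionFreeMap (hct.precoverMap f.hom).hom ≫ (e Y).hom = (e X).hom ≫ f.hom
  rw [← cancel_epi (ht.torsionSeq _).π, reassoc_of% ht.π_torsionFreeMap, he, hct.precoverMap_π,
    reassoc_of% he]

lemma nonempty_torsionFreeQuotFunctor_comp_coverFunctor_iso (hct : IsCotorsionPair C T)
    (ht : IsTorsionPair T F) :
    Nonempty (torsionFreeQuotFunctor ht ⋙ ObjectProperty.ι _ ⋙ hct.coverFunctor ht ≅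
      𝟭 (AddQuot C (C ∩ T))) := by
  choose u hu hiso using fun Y : ObjectProperty.FullSubcategory (· ∈ C) =>
    let s := hct.specialPrecover (ht.torsionSeq Y.obj).free.obj
    hct.exists_isIso_toAddQuot_map ht s.isSes (ht.torsionSeq Y.obj).isSes s.ker_mem
      (ht.torsionSeq Y.obj).torsion_mem
  let Q := toAddQuot C (C ∩ T)
  refine ⟨CategoryTheory.Quotient.natIsoLift _ <|
    NatIso.ofComponents (fun Y => @asIso _ _ _ _ _ (hiso Y)) fun {Y Y'} g => ?_⟩
  change Q.map (hct.precoverMap (ht.torsionFreeMap g.hom)) ≫ Q.map (u Y') = Q.map (u Y) ≫ Q.map g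
  rw [← Q.map_comp, ← Q.map_comp]
  refine hct.toAddQuot_map_eq_of_comp_eq ht (ht.torsionSeq Y'.obj).isSes
    (ht.torsionSeq Y'.obj).torsion_mem ?_
  rw [ObjectProperty.FullSubcategory.comp_hom_assoc, ObjectProperty.FullSubcategory.comp_hom_assoc,
    hu, hct.precoverMap_π, ← ht.π_torsionFreeMap, reassoc_of% hu]

end Equivalence

/-- For a cotorsion torsion triple `(C, T, F)` the functors `c` and
`f` restrict to mutually inverse equivalences between `F` and the additive quotient
`C/(C ∩ T)`: there are functors `Φ = c|_F` and `Ψ = f|_C` which are mutually inverse,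
where `Φ X` is a special `C`-approximation of `X` (with kernel in `T`) and `Ψ Y` is
the torsion-free quotient of `Y` (with kernel in `T`). -/
theorem statement7 {C T F : Set A} (hct : IsCotorsionPair C T) (ht : IsTorsionPair T F) :
    ∃ (Φ : ObjectProperty.FullSubcategory (· ∈ F) ⥤ AddQuot C (C ∩ T))
      (Ψ : AddQuot C (C ∩ T) ⥤ ObjectProperty.FullSubcategory (· ∈ F)),
      Nonempty (Φ ⋙ Ψ ≅ 𝟭 (ObjectProperty.FullSubcategory (· ∈ F))) ∧
      Nonempty (Ψ ⋙ Φ ≅ 𝟭 (AddQuot C (C ∩ T))) ∧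
      (∀ X : ObjectProperty.FullSubcategory (· ∈ F),
        ∃ (dX : A) (_ : dX ∈ T) (i : dX ⟶ ((Φ.obj X).as).obj)
          (p : ((Φ.obj X).as).obj ⟶ X.obj), IsSes i p) ∧
      (∀ Y : AddQuot C (C ∩ T),
        ∃ (fY : A) (_ : fY ∈ T) (i : fY ⟶ (Y.as).obj)
          (p : (Y.as).obj ⟶ (Ψ.obj Y).obj), IsSes i p) :=
  ⟨ObjectProperty.ι _ ⋙ hct.coverFunctor ht, torsionFreeQuotFunctor ht,
    nonempty_coverFunctor_comp_torsionFreeQuotFunctor_iso hct ht,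
    nonempty_torsionFreeQuotFunctor_comp_coverFunctor_iso hct ht,
    fun X => ⟨_, (hct.specialPrecover X.obj).ker_mem, _, _, (hct.specialPrecover X.obj).isSes⟩,
    fun Y => ⟨_, (ht.torsionSeq Y.as.obj).torsion_mem, _, _, (ht.torsionSeq Y.as.obj).isSes⟩⟩

end Paper
end

section
/- Let A be an abelian category with enough projectives and T a weak tilting subcategory. Then Fac T = T⊥₁, i.e., the class of quotients of finite direct sums of objects of T equals the class of objects A with Ext¹(T, A) = 0 for all T ∈ T. -/
open CategoryTheory Category Limits

attribute [local instance] CategoryTheory.Abelian.hasFiniteBiproducts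
attribute [local instance] CategoryTheory.Limits.HasFiniteBiproducts.of_hasFiniteProducts

universe w v u

namespace Paper

variable {A : Type u} [Category.{v} A] [Abelian A]

/-! Both inclusions rest on one observation about a short exact sequence
`0 ⟶ K ⟶ P ⟶ Z ⟶ 0`: if `Ext¹(Z, Y) = 0`, every map `K ⟶ Y` extends to `P` (push the sequence
out along it and split), and conversely, when `P` is projective, this extension property for
maps `K ⟶ X` forces `Ext¹(Z, X) = 0`. For `Fac T ⊆ T^{⊥₁}`, resolve `Z ∈ T` as `P₁ ↪ P₀ ↠ Z`:
a map `P₁ ⟶ X` lifts through an epimorphism `Y ↠ X` with `Y ∈ T` and then extends to `P₀`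
since `Ext¹(Z, Y) = 0`. For `T^{⊥₁} ⊆ Fac T`, extend an epimorphism `P ↠ X` from a projective
along a coresolution `P ↪ T₀ ↠ T₁`; the extension `T₀ ⟶ X` is again an epimorphism. -/

lemma IsSes.pushout {K P Z Y : A} {i : K ⟶ P} {p : P ⟶ Z} (h : IsSes i p) (f : K ⟶ Y) :
    IsSes (pushout.inl f i) (pushout.desc 0 p (by rw [h.1, comp_zero])) := by
  obtain ⟨w, hS⟩ := h
  have := hS.mono_f
  have := hS.epi_g
  refine ⟨pushout.inl_desc _ _ _, .mk' (ShortComplex.exact_of_g_is_cokernel _ ?_) inferInstance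
    (epi_of_epi_fac (pushout.inr_desc _ _ _))⟩
  refine CokernelCofork.IsColimit.ofπ _ _
    (fun k hk => hS.exact.desc (pushout.inr f i ≫ k)
      (by rw [← assoc, ← pushout.condition, assoc, hk, comp_zero]))
    (fun k hk => ?_) (fun k hk m hm => ?_)
  · apply pushout.hom_ext
    · rw [pushout.inl_desc_assoc, zero_comp, hk]
    · rw [pushout.inr_desc_assoc]
      exact hS.exact.g_desc _ _
  · rw [← cancel_epi p]
    rw [hS.exact.g_desc, ← hm, pushout.inr_desc_assoc]

lemma IsSes.exists_extension {K P Z Y : A} {i : K ⟶ P} {p : P ⟶ Z} (h : IsSes i p)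
    (hZY : Ext1Zero Z Y) (f : K ⟶ Y) : ∃ g : P ⟶ Y, i ≫ g = f := by
  obtain ⟨s, hs⟩ := hZY _ _ (h.pushout f)
  obtain ⟨_, hS⟩ := h.pushout f
  let σ := ShortComplex.Splitting.ofExactOfSection _ hS.exact s hs hS.mono_f
  exact ⟨pushout.inr f i ≫ σ.r, by rw [← assoc, ← pushout.condition, assoc, σ.f_r, comp_id]⟩

lemma ext1Zero_of_isSes_of_forall_exists_extension {K P Z X : A} [Projective P]
    {i : K ⟶ P} {p : P ⟶ Z} (h : IsSes i p) (hext : ∀ b : K ⟶ X, ∃ g : P ⟶ X, i ≫ g = b) :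
    Ext1Zero Z X := by
  rintro E ι π ⟨wE, hE⟩
  obtain ⟨w, hS⟩ := h
  have := hS.epi_g
  have := hE.mono_f
  have := hE.epi_g
  let a : P ⟶ E := Projective.factorThru p π
  have ha : a ≫ π = p := Projective.factorThru_comp p π
  obtain ⟨g, hg⟩ := hext (hE.exact.lift (i ≫ a) (by rw [assoc, ha, w]))
  have hgι : i ≫ g ≫ ι = i ≫ a := by
    rw [← assoc, hg]
    exact hE.exact.lift_f _ _
  -- `a` corrected by `g ≫ ι` vanishes on `K`, so it descends to a section `Z ⟶ E`.
  let s := hS.exact.desc (a - g ≫ ι) (by rw [Preadditive.comp_sub, hgι, sub_self])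
  refine ⟨s, ?_⟩
  rw [← cancel_epi p, ← assoc, hS.exact.g_desc]
  rw [Preadditive.sub_comp, ha, assoc, wE, comp_zero, sub_zero, comp_id]

lemma ext1Zero_of_epi {Z Y X : A} (hZ : PdLeOne Z) (hZY : Ext1Zero Z Y) (q : Y ⟶ X) [Epi q] :
    Ext1Zero Z X := by
  obtain ⟨P₁, P₀, i, p, _, _, h⟩ := hZ
  refine ext1Zero_of_isSes_of_forall_exists_extension h fun b => ?_
  obtain ⟨g, hg⟩ := h.exists_extension hZY (Projective.factorThru b q)
  exact ⟨g ≫ q, by rw [← assoc, hg, Projective.factorThru_comp]⟩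

/-- For a weak tilting subcategory `T` of an abelian category with
enough projectives, `Fac T = T^{⊥₁}`. -/
theorem statement10 [EnoughProjectives A] {T : Set A} (hT : IsWeakTilting T) :
    Fac T = rightExt1Perp T := by
  ext X
  constructor
  · rintro ⟨Y, hY, q, hq⟩ Z hZ
    exact ext1Zero_of_epi (hT.pd_le_one Z hZ) (hT.ext1_zero hZ hY) q
  · intro hX
    obtain ⟨T₀, T₁, i, p, hT₀, hT₁, h⟩ := hT.coresolution (Projective.over X) inferInstance
    obtain ⟨g, hg⟩ := h.exists_extension (hX T₁ hT₁) (Projective.π X)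
    exact ⟨T₀, hT₀, g, epi_of_epi_fac hg⟩

end Paper
end
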